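/- arXiv:1712.00704 — 4 statements merged into one kernel-verified Lean document; each statement's English description precedes it below -/
import Mathlib

section
/- Let A ∈ ℝ^{n1×n2×n3} and B ∈ ℝ^{n2×n1×n3} be third-order tensors and let C = A * B be their tensor product (t-product). Then the trace of C (sum of traces of its frontal slices) satisfies tr(A * B) = tr((Σ_{i=1}^{n3} A^{(i)}) · (Σ_{i=1}^{n3} B^{(i)})), i.e., it equals the trace of the product of the sums of frontal slices of A and B. -/
/-! Summing a convolution over a finite group sums each factor independently, since `k ↦ k - t`
is a bijection for every `t`. Applied to the frontal slices, the slice sum of `A * B` is the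
product of the slice sums of `A` and `B`, and the trace is additive. -/

open Matrix

/-- The t-th frontal fSlice of a third-order tensor, as a matrix. -/
def fSlice {n1 n2 n3 : ℕ} (A : Fin n1 → Fin n2 → Fin n3 → ℝ) (t : Fin n3) :
    Matrix (Fin n1) (Fin n2) ℝ :=
  fun i j => A i j t

/-- The t-product of third-order tensors: fSlice-wise circular convolution. -/
def tProd {n1 n2 n4 n3 : ℕ} (A : Fin n1 → Fin n2 → Fin n3 → ℝ)
    (B : Fin n2 → Fin n4 → Fin n3 → ℝ) : Fin n1 → Fin n4 → Fin n3 → ℝ :=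
  fun i j k => ∑ t : Fin n3, (fSlice A (k - t) * fSlice B t) i j

theorem Matrix.sum_sum_sub_mul {G m n p R : Type*} [AddGroup G] [Fintype G] [Fintype n]
    [NonUnitalNonAssocSemiring R] (M : G → Matrix m n R) (N : G → Matrix n p R) :
    ∑ k, ∑ t, M (k - t) * N t = (∑ s, M s) * ∑ t, N t :=
  calc ∑ k, ∑ t, M (k - t) * N t
      = ∑ t, (∑ k, M (k - t)) * N t := by
        rw [Finset.sum_comm]
        simp only [Matrix.sum_mul]
    _ = ∑ t, (∑ s, M s) * N t := by
        refine Finset.sum_congr rfl fun t _ => ?_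
        rw [← Equiv.sum_comp (Equiv.subRight t) M]
        rfl
    _ = (∑ s, M s) * ∑ t, N t := (Matrix.mul_sum _ _ _).symm

theorem fSlice_tProd {n1 n2 n4 n3 : ℕ} (A : Fin n1 → Fin n2 → Fin n3 → ℝ)
    (B : Fin n2 → Fin n4 → Fin n3 → ℝ) (k : Fin n3) :
    fSlice (tProd A B) k = ∑ t, fSlice A (k - t) * fSlice B t := by
  ext i j
  simp [fSlice, tProd, Matrix.sum_apply]

theorem sum_fSlice_tProd {n1 n2 n4 n3 : ℕ} [NeZero n3] (A : Fin n1 → Fin n2 → Fin n3 → ℝ)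
    (B : Fin n2 → Fin n4 → Fin n3 → ℝ) :
    ∑ k, fSlice (tProd A B) k = (∑ s, fSlice A s) * ∑ t, fSlice B t := by
  simp only [fSlice_tProd]
  exact Matrix.sum_sum_sub_mul _ _

/-- tr(A * B) = tr((Σᵢ A⁽ⁱ⁾)·(Σᵢ B⁽ⁱ⁾)). -/
theorem trace_tprod_eq_trace_sum_slices {n1 n2 n3 : ℕ}
    (A : Fin n1 → Fin n2 → Fin n3 → ℝ) (B : Fin n2 → Fin n1 → Fin n3 → ℝ) :
    ∑ k : Fin n3, (fSlice (tProd A B) k).trace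
      = ((∑ i : Fin n3, fSlice A i) * (∑ i : Fin n3, fSlice B i)).trace := by
  cases n3 with
  | zero => simp
  | succ n => rw [← trace_sum, sum_fSlice_tProd]
end

section
/- For a real matrix X ∈ ℝ^{m×n} and 0 ≤ r ≤ min(m,n), the truncated nuclear norm ‖X‖_r := Σ_{j=r+1}^{min(m,n)} σ_j(X) (the sum of the smallest min(m,n)−r singular values) satisfies ‖X‖_r = ‖X‖_* − max{ tr(A X Bᵀ) : A ∈ ℝ^{r×m}, B ∈ ℝ^{r×n}, A Aᵀ = I_r, B Bᵀ = I_r }, where ‖X‖_* = Σ_j σ_j(X) is the nuclear norm; moreover the maximum is attained by taking A (resp. B) to be the transposes of the first r left (resp. right) singular vectors of X. -/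
/-!
Write `P = A U` and `Q = B V`; these again have orthonormal rows, and
`tr (A X Bᵀ) = ∑ⱼ σⱼ (Pᵀ Q)ⱼⱼ`. By AM-GM, `(Pᵀ Q)ⱼⱼ ≤ dⱼ := ((Pᵀ P)ⱼⱼ + (Qᵀ Q)ⱼⱼ) / 2`, and the
diagonal of the projection `Pᵀ P` lies in `[0, 1]` and sums to `r`, so the weights `dⱼ ∈ [0, 1]`
have total mass at most `r`. Against decreasing `σ`, such weights do best by putting mass one
on the first `r` indices, which gives `tr (A X Bᵀ) ≤ σ₁ + ⋯ + σᵣ`; the first `r` singular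
vectors attain this bound.
-/

open Matrix

/-- The m×n rectangular diagonal matrix with diagonal entries σ. -/
def sigMat {m n : ℕ} (σ : Fin (min m n) → ℝ) : Matrix (Fin m) (Fin n) ℝ :=
  fun i j => if h : (i : ℕ) = (j : ℕ) ∧ (i : ℕ) < min m n then σ ⟨i, h.2⟩ else 0

open Finset

theorem sum_mul_le_sum_of_threshold {ι : Type*} [Fintype ι] (T : Finset ι) (σ d : ι → ℝ)
    (s : ℝ) (hs : 0 ≤ s) (hT : ∀ j ∈ T, s ≤ σ j) (hTc : ∀ j ∉ T, σ j ≤ s)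
    (hd0 : ∀ j, 0 ≤ d j) (hd1 : ∀ j, d j ≤ 1) (hd : ∑ j, d j ≤ #T) :
    ∑ j, σ j * d j ≤ ∑ j ∈ T, σ j := by
  classical
  have hterm : ∀ j, (σ j - s) * (d j - if j ∈ T then 1 else 0) ≤ 0 := by
    intro j
    split_ifs with hj
    · exact mul_nonpos_of_nonneg_of_nonpos (sub_nonneg.2 (hT j hj)) (sub_nonpos.2 (hd1 j))
    · rw [sub_zero]
      exact mul_nonpos_of_nonpos_of_nonneg (sub_nonpos.2 (hTc j hj)) (hd0 j)
  have hsplit : ∑ j, σ j * d j = ∑ j, (σ j - s) * (d j - if j ∈ T then 1 else 0)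
      + ∑ j ∈ T, σ j + s * (∑ j, d j - #T) := by
    simp only [mul_sub, sub_mul, mul_ite, mul_one, mul_zero, sum_sub_distrib, sum_ite_mem,
      univ_inter, ← mul_sum, sum_const, nsmul_eq_mul]
    ring
  have hslack : s * (∑ j, d j - #T) ≤ 0 := mul_nonpos_of_nonneg_of_nonpos hs (sub_nonpos.2 hd)
  linarith [sum_nonpos fun j (_ : j ∈ univ) => hterm j]

theorem Fin.sum_castLE_eq_sum_filter_lt {M : Type*} [AddCommMonoid M] {N r : ℕ} (hr : r ≤ N)
    (f : Fin N → M) :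
    ∑ i : Fin r, f (Fin.castLE hr i) = ∑ j ∈ univ.filter (fun j : Fin N => (j : ℕ) < r), f j := by
  refine (sum_map univ (Fin.castLEEmb hr) f).symm.trans ?_
  congr 1
  ext j
  simpa [Fin.ext_iff] using ⟨fun ⟨i, hi⟩ => hi ▸ i.2, fun hj => ⟨⟨j, hj⟩, rfl⟩⟩

theorem Fin.sum_castLE_add_sum_filter_le {M : Type*} [AddCommMonoid M] {N r : ℕ} (hr : r ≤ N)
    (f : Fin N → M) :
    ∑ i : Fin r, f (Fin.castLE hr i) + ∑ j ∈ univ.filter (fun j : Fin N => r ≤ (j : ℕ)), f j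
      = ∑ j, f j := by
  simp only [Fin.sum_castLE_eq_sum_filter_lt hr, ← not_lt]
  exact sum_filter_add_sum_filter_not _ _ _

theorem sum_mul_le_sum_castLE_of_antitone {N r : ℕ} (hr : r ≤ N) {σ : Fin N → ℝ}
    (hσ0 : ∀ j, 0 ≤ σ j) (hσ : Antitone σ) (d : Fin N → ℝ)
    (hd0 : ∀ j, 0 ≤ d j) (hd1 : ∀ j, d j ≤ 1) (hd : ∑ j, d j ≤ r) :
    ∑ j, σ j * d j ≤ ∑ i : Fin r, σ (Fin.castLE hr i) := by
  rw [Fin.sum_castLE_eq_sum_filter_lt]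
  -- threshold: the largest value outside the first `r` (none when `r = N`)
  refine sum_mul_le_sum_of_threshold _ σ d (if h : r < N then σ ⟨r, h⟩ else 0) ?_ ?_ ?_ hd0 hd1
    (by rwa [Fin.card_filter_val_lt, min_eq_right hr])
  · split_ifs
    exacts [hσ0 _, le_rfl]
  · intro j hj
    rw [mem_filter] at hj
    split_ifs
    exacts [hσ (Fin.le_iff_val_le_val.2 hj.2.le), hσ0 j]
  · intro j hj
    simp only [mem_filter, mem_univ, true_and, not_lt] at hj
    rw [dif_pos (hj.trans_lt j.2)]
    exact hσ (Fin.le_iff_val_le_val.2 hj)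

namespace Matrix

theorem submatrix_mul_mul_transpose_submatrix {α : Type*} [NonUnitalNonAssocSemiring α]
    {l o p q κ μ : Type*} [Fintype o] [Fintype p]
    (W : Matrix l o α) (M : Matrix o p α) (Z : Matrix q p α) (e : κ → l) (f : μ → q) :
    W.submatrix e id * M * (Z.submatrix f id)ᵀ = (W * M * Zᵀ).submatrix e f := by
  rw [transpose_submatrix, submatrix_mul _ _ e id f Function.bijective_id,
    submatrix_mul _ _ e id id Function.bijective_id, submatrix_id_id]

theorem submatrix_mul_transpose_submatrix_eq_one {α : Type*} [NonAssocSemiring α]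
    {ι κ μ : Type*} [Fintype κ] [DecidableEq ι] [DecidableEq μ]
    {W : Matrix ι κ α} (hW : W * Wᵀ = 1) (e : μ ↪ ι) :
    W.submatrix e id * (W.submatrix e id)ᵀ = 1 := by
  rw [transpose_submatrix, ← submatrix_mul _ _ e id e Function.bijective_id, hW,
    submatrix_one_embedding]

theorem mul_mul_transpose_eq_one {α : Type*} [CommSemiring α]
    {ι κ : Type*} [Fintype κ] [DecidableEq ι] [DecidableEq κ]
    {A : Matrix ι κ α} {U : Matrix κ κ α} (hA : A * Aᵀ = 1) (hU : U * Uᵀ = 1) :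
    A * U * (A * U)ᵀ = 1 := by
  rw [transpose_mul, Matrix.mul_assoc, ← Matrix.mul_assoc U, hU, Matrix.one_mul, hA]

variable {ι κ μ : Type*} [Fintype ι]

theorem transpose_mul_self_apply_self_nonneg (P : Matrix ι κ ℝ) (a : κ) : 0 ≤ (Pᵀ * P) a a := by
  simp only [mul_apply, transpose_apply]
  exact sum_nonneg fun i _ => mul_self_nonneg _

theorem transpose_mul_apply_le (P : Matrix ι κ ℝ) (Q : Matrix ι μ ℝ) (a : κ) (b : μ) :
    (Pᵀ * Q) a b ≤ ((Pᵀ * P) a a + (Qᵀ * Q) b b) / 2 := by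
  simp only [mul_apply, transpose_apply, ← sum_add_distrib, sum_div]
  exact sum_le_sum fun i _ => by nlinarith [sq_nonneg (P i a - Q i b)]

variable [DecidableEq ι] [Fintype κ] {P : Matrix ι κ ℝ}

theorem transpose_mul_self_apply_self_le_one (hP : P * Pᵀ = 1) (a : κ) : (Pᵀ * P) a a ≤ 1 := by
  set G := Pᵀ * P
  have hGG : G * G = G := by
    rw [Matrix.mul_assoc, ← Matrix.mul_assoc P, hP, Matrix.one_mul]
  have hGsymm : Gᵀ = G := by rw [transpose_mul, transpose_transpose]
  have hsq : G a a ^ 2 ≤ G a a :=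
    calc G a a ^ 2 ≤ ∑ k, G a k * G k a := by
          have hsym : ∀ k, G k a = G a k := fun k => congrFun (congrFun hGsymm a) k
          simp only [hsym, ← sq]
          exact single_le_sum (fun k _ => sq_nonneg (G a k)) (mem_univ a)
      _ = G a a := by rw [← mul_apply, hGG]
  nlinarith [transpose_mul_self_apply_self_nonneg P a]

theorem trace_transpose_mul_self_eq_card (hP : P * Pᵀ = 1) :
    (Pᵀ * P).trace = Fintype.card ι := by
  rw [trace_mul_comm, hP, trace_one]

theorem sum_transpose_mul_self_apply_embedding_le [Fintype μ] (hP : P * Pᵀ = 1) (e : μ ↪ κ) :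
    ∑ j, (Pᵀ * P) (e j) (e j) ≤ Fintype.card ι := by
  rw [← trace_transpose_mul_self_eq_card hP, trace, ← sum_map univ e (fun a => (Pᵀ * P) a a)]
  exact sum_le_sum_of_subset_of_nonneg (subset_univ _)
    fun a _ _ => transpose_mul_self_apply_self_nonneg P a

end Matrix

section sigMat

variable {m n : ℕ} (σ : Fin (min m n) → ℝ)

theorem sigMat_castLE_castLE (j : Fin (min m n)) :
    sigMat σ (Fin.castLE (min_le_left m n) j) (Fin.castLE (min_le_right m n) j) = σ j :=
  dif_pos ⟨rfl, j.2⟩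

theorem sum_sum_sigMat_mul (f : Matrix (Fin m) (Fin n) ℝ) :
    ∑ a, ∑ b, sigMat σ a b * f a b
      = ∑ j, σ j * f (Fin.castLE (min_le_left m n) j) (Fin.castLE (min_le_right m n) j) := by
  rw [← Fintype.sum_prod_type']
  symm
  refine sum_of_injOn (fun j => (Fin.castLE (min_le_left m n) j, Fin.castLE (min_le_right m n) j))
    ?_ (fun _ _ => mem_univ _) ?_ ?_
  · intro i _ j _ h
    exact Fin.castLE_injective (min_le_left m n) (congrArg Prod.fst h)
  · rintro ⟨a, b⟩ _ hab
    refine mul_eq_zero_of_left (dif_neg fun h => hab ⟨⟨a, h.2⟩, mem_coe.2 (mem_univ _), ?_⟩) _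
    simpa [Fin.ext_iff] using h.1
  · intro j _
    simp only [sigMat_castLE_castLE]

theorem trace_mul_sigMat_mul_transpose {ι : Type*} [Fintype ι]
    (P : Matrix ι (Fin m) ℝ) (Q : Matrix ι (Fin n) ℝ) :
    (P * sigMat σ * Qᵀ).trace
      = ∑ j, σ j * (Pᵀ * Q) (Fin.castLE (min_le_left m n) j) (Fin.castLE (min_le_right m n) j) := by
  have hQP : Qᵀ * P = (Pᵀ * Q)ᵀ := by rw [transpose_mul, transpose_transpose]
  rw [Matrix.mul_assoc, trace_mul_comm, Matrix.mul_assoc, hQP, ← sum_sum_sigMat_mul]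
  rfl

theorem trace_submatrix_castLE_sigMat {r : ℕ} (hr : r ≤ min m n) :
    ((sigMat σ).submatrix (Fin.castLE (hr.trans (min_le_left m n)))
      (Fin.castLE (hr.trans (min_le_right m n)))).trace = ∑ i : Fin r, σ (Fin.castLE hr i) :=
  sum_congr rfl fun i _ => sigMat_castLE_castLE σ (Fin.castLE hr i)

end sigMat

theorem trace_mul_sigMat_mul_transpose_le {m n r : ℕ} (hr : r ≤ min m n) {σ : Fin (min m n) → ℝ}
    (hσ0 : ∀ j, 0 ≤ σ j) (hσ : Antitone σ)
    {P : Matrix (Fin r) (Fin m) ℝ} {Q : Matrix (Fin r) (Fin n) ℝ}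
    (hP : P * Pᵀ = 1) (hQ : Q * Qᵀ = 1) :
    (P * sigMat σ * Qᵀ).trace ≤ ∑ i : Fin r, σ (Fin.castLE hr i) := by
  set eₘ := Fin.castLEEmb (min_le_left m n)
  set eₙ := Fin.castLEEmb (min_le_right m n)
  set d : Fin (min m n) → ℝ := fun j => ((Pᵀ * P) (eₘ j) (eₘ j) + (Qᵀ * Q) (eₙ j) (eₙ j)) / 2
  have hd0 : ∀ j, 0 ≤ d j := fun j => by
    have := transpose_mul_self_apply_self_nonneg P (eₘ j)
    have := transpose_mul_self_apply_self_nonneg Q (eₙ j)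
    positivity
  have hd1 : ∀ j, d j ≤ 1 := fun j => by
    have := transpose_mul_self_apply_self_le_one hP (eₘ j)
    have := transpose_mul_self_apply_self_le_one hQ (eₙ j)
    simp only [d]
    linarith
  have hd : ∑ j, d j ≤ r := by
    have hPr := sum_transpose_mul_self_apply_embedding_le hP eₘ
    have hQr := sum_transpose_mul_self_apply_embedding_le hQ eₙ
    rw [Fintype.card_fin] at hPr hQr
    simp only [d, ← sum_div, sum_add_distrib]
    linarith
  calc (P * sigMat σ * Qᵀ).trace = ∑ j, σ j * (Pᵀ * Q) (eₘ j) (eₙ j) :=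
        trace_mul_sigMat_mul_transpose σ P Q
    _ ≤ ∑ j, σ j * d j :=
        sum_le_sum fun j _ => mul_le_mul_of_nonneg_left (transpose_mul_apply_le P Q _ _) (hσ0 j)
    _ ≤ ∑ i : Fin r, σ (Fin.castLE hr i) :=
        sum_mul_le_sum_castLE_of_antitone hr hσ0 hσ d hd0 hd1 hd

/-- Truncated nuclear norm: ‖X‖_r = ‖X‖_* − max { tr(AXBᵀ) : AAᵀ = I, BBᵀ = I },
with the maximum attained by the transposes of the first r singular vectors. -/
theorem truncated_nuclear_norm_eq {m n r : ℕ} (hr : r ≤ min m n)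
    (X : Matrix (Fin m) (Fin n) ℝ)
    (U : Matrix (Fin m) (Fin m) ℝ) (V : Matrix (Fin n) (Fin n) ℝ)
    (σ : Fin (min m n) → ℝ)
    (hU : U * Uᵀ = 1) (hU' : Uᵀ * U = 1)
    (hV : V * Vᵀ = 1) (hV' : Vᵀ * V = 1)
    (hσ0 : ∀ i, 0 ≤ σ i) (hσd : ∀ i j, i ≤ j → σ j ≤ σ i)
    (hX : X = U * sigMat σ * Vᵀ) :
    -- the attaining pair A₀, B₀: transposes of the first r columns of U and V
    let A₀ : Matrix (Fin r) (Fin m) ℝ :=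
      fun i j => U j (Fin.castLE (hr.trans (min_le_left m n)) i)
    let B₀ : Matrix (Fin r) (Fin n) ℝ :=
      fun i j => V j (Fin.castLE (hr.trans (min_le_right m n)) i)
    (A₀ * X * B₀ᵀ).trace = ∑ i : Fin r, σ (Fin.castLE hr i) ∧
    IsGreatest
      {t : ℝ | ∃ A : Matrix (Fin r) (Fin m) ℝ, ∃ B : Matrix (Fin r) (Fin n) ℝ,
        A * Aᵀ = 1 ∧ B * Bᵀ = 1 ∧ t = (A * X * Bᵀ).trace}
      ((A₀ * X * B₀ᵀ).trace) ∧
    (∑ j ∈ Finset.univ.filter (fun j : Fin (min m n) => r ≤ (j : ℕ)), σ j)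
      = (∑ j : Fin (min m n), σ j) - (A₀ * X * B₀ᵀ).trace := by
  intro A₀ B₀
  have hA₀ : A₀ = Uᵀ.submatrix (Fin.castLEEmb (hr.trans (min_le_left m n))) id := rfl
  have hB₀ : B₀ = Vᵀ.submatrix (Fin.castLEEmb (hr.trans (min_le_right m n))) id := rfl
  have hopt : (A₀ * X * B₀ᵀ).trace = ∑ i : Fin r, σ (Fin.castLE hr i) := by
    rw [hA₀, hB₀, submatrix_mul_mul_transpose_submatrix, transpose_transpose, hX,
      ← Matrix.mul_assoc, ← Matrix.mul_assoc, hU', Matrix.one_mul, Matrix.mul_assoc, hV',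
      Matrix.mul_one]
    exact trace_submatrix_castLE_sigMat σ hr
  refine ⟨hopt, ⟨⟨A₀, B₀, ?_, ?_, rfl⟩, ?_⟩, ?_⟩
  · rw [hA₀]
    exact submatrix_mul_transpose_submatrix_eq_one (by rwa [transpose_transpose]) _
  · rw [hB₀]
    exact submatrix_mul_transpose_submatrix_eq_one (by rwa [transpose_transpose]) _
  · rintro t ⟨A, B, hA, hB, rfl⟩
    rw [hopt, hX, show A * (U * sigMat σ * Vᵀ) * Bᵀ = A * U * sigMat σ * (B * V)ᵀ by
      simp only [transpose_mul, Matrix.mul_assoc]]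
    exact trace_mul_sigMat_mul_transpose_le hr hσ0 hσd
      (mul_mul_transpose_eq_one hA hU) (mul_mul_transpose_eq_one hB hV)
  · rw [hopt, ← Fin.sum_castLE_add_sum_filter_le hr σ]
    ring
end

section
/- For τ > 0 and a matrix W ∈ ℝ^{m×n}, the singular value thresholding operator D_τ(W) := U diag(max(σ_i − τ, 0)) Vᵀ (where W = U diag(σ) Vᵀ is an SVD of W) is the unique minimizer of the function X ↦ τ‖X‖_* + (1/2)‖X − W‖_F², where ‖·‖_* is the nuclear norm and ‖·‖_F the Frobenius norm. -/
open Matrix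

/-- The nuclear norm of a real matrix: the sum of its singular values,
i.e. of the square roots of the eigenvalues of XᴴX. -/
noncomputable def nuclearNorm {m n : ℕ} (X : Matrix (Fin m) (Fin n) ℝ) : ℝ :=
  ∑ i, Real.sqrt ((Matrix.isHermitian_conjTranspose_mul_self X).eigenvalues i)

/-- Squared Frobenius norm of a real matrix. -/
def frobSq {m n : ℕ} (X : Matrix (Fin m) (Fin n) ℝ) : ℝ :=
  ∑ i, ∑ j, (X i j) ^ 2

/-! The matrix `G := W - D = U diag(min(σᵢ, τ)) Vᵀ` is a subgradient of `τ‖·‖_*` at `D`.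
Indeed `⟪G, D⟫ = τ‖D‖_*`, because `min(σᵢ, τ) = τ` wherever `max(σᵢ - τ, 0) > 0`, and
`⟪G, X⟫ ≤ τ‖X‖_*` for every `X`, because `GᵀG ≤ τ²`: diagonalise `XᵀX = Q Λ Qᵀ` and apply
Cauchy–Schwarz to the columns of `GQ` and `XQ`, whose squared lengths are at most `τ²` and
exactly the eigenvalues of `XᵀX`. Expanding `‖X - W‖² = ‖X - D‖² + 2⟪X - D, D - W⟫ + ‖D - W‖²`,
the subgradient inequality gives `F(X) ≥ F(D) + ½‖X - D‖²` for the objective `F`, which is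
minimality and uniqueness at once. -/

section Frobenius

variable {m n : ℕ}

lemma frobSq_eq_trace (A : Matrix (Fin m) (Fin n) ℝ) : frobSq A = (Aᵀ * A).trace := by
  simp only [frobSq, trace, diag, mul_apply, transpose_apply, sq]
  exact Finset.sum_comm

lemma frobSq_nonneg (A : Matrix (Fin m) (Fin n) ℝ) : 0 ≤ frobSq A := by
  unfold frobSq; positivity

lemma frobSq_eq_zero_iff {A : Matrix (Fin m) (Fin n) ℝ} : frobSq A = 0 ↔ A = 0 := by
  simp [frobSq, Finset.sum_eq_zero_iff_of_nonneg, sq_nonneg, Finset.sum_nonneg, ← Matrix.ext_iff]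

lemma frobSq_add (A B : Matrix (Fin m) (Fin n) ℝ) :
    frobSq (A + B) = frobSq A + 2 * (Aᵀ * B).trace + frobSq B := by
  rw [frobSq_eq_trace, frobSq_eq_trace, frobSq_eq_trace, transpose_add, Matrix.add_mul,
    Matrix.mul_add, Matrix.mul_add, trace_add, trace_add, trace_add, ← trace_transpose (Bᵀ * A),
    transpose_mul, transpose_transpose]
  ring

lemma trace_transpose_mul_le_sum_sqrt_diag (A B : Matrix (Fin m) (Fin n) ℝ) :
    (Aᵀ * B).trace ≤ ∑ k, √((Aᵀ * A) k k) * √((Bᵀ * B) k k) := by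
  simp only [trace, diag, mul_apply, transpose_apply, ← sq]
  gcongr with k
  exact Real.sum_mul_le_sqrt_mul_sqrt _ _ _

lemma trace_transpose_mul_orthogonal_conj {m' : ℕ} {P : Matrix (Fin m') (Fin m) ℝ}
    {Q : Matrix (Fin n) (Fin n) ℝ} (hP : Pᵀ * P = 1) (hQ : Qᵀ * Q = 1)
    (A B : Matrix (Fin m) (Fin n) ℝ) : ((P * A * Qᵀ)ᵀ * (P * B * Qᵀ)).trace = (Aᵀ * B).trace := by
  simp only [transpose_mul, transpose_transpose, Matrix.mul_assoc]
  rw [← Matrix.mul_assoc Pᵀ, hP, Matrix.one_mul, trace_mul_comm, Matrix.mul_assoc,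
    Matrix.mul_assoc, hQ, Matrix.mul_one]

def IsSubgradient (f : Matrix (Fin m) (Fin n) ℝ → ℝ) (D G : Matrix (Fin m) (Fin n) ℝ) : Prop :=
  ∀ X, f D + (Gᵀ * (X - D)).trace ≤ f X

theorem IsSubgradient.add_half_frobSq_le {f : Matrix (Fin m) (Fin n) ℝ → ℝ}
    {D W : Matrix (Fin m) (Fin n) ℝ} (hD : IsSubgradient f D (W - D))
    (X : Matrix (Fin m) (Fin n) ℝ) :
    f D + 1 / 2 * frobSq (D - W) + 1 / 2 * frobSq (X - D) ≤ f X + 1 / 2 * frobSq (X - W) := by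
  have hcross : ((X - D)ᵀ * (D - W)).trace = -((W - D)ᵀ * (X - D)).trace := by
    rw [← trace_transpose, transpose_mul, transpose_transpose, ← neg_sub, transpose_neg,
      Matrix.neg_mul, trace_neg]
  rw [show X - W = (X - D) + (D - W) by abel, frobSq_add, hcross]
  linarith [hD X]

end Frobenius

section NuclearNorm

lemma Matrix.IsHermitian.sum_comp_eigenvalues_of_eq_diagonal {ι : Type*} [Fintype ι]
    [DecidableEq ι] {A : Matrix ι ι ℝ} (hA : A.IsHermitian) {e : ι → ℝ} (he : A = diagonal e)
    (f : ℝ → ℝ) :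
    ∑ i, f (hA.eigenvalues i) = ∑ i, f (e i) := by
  subst he
  have hroots : Multiset.map hA.eigenvalues Finset.univ.val = Multiset.map e Finset.univ.val := by
    have := hA.roots_charpoly_eq_eigenvalues
    rw [charpoly_diagonal, Polynomial.roots_prod _ _
      (Finset.prod_ne_zero_iff.mpr fun i _ => Polynomial.X_sub_C_ne_zero _)] at this
    simpa using this.symm
  simpa [Multiset.map_map, Function.comp_def] using congrArg (fun s => (s.map f).sum) hroots

variable {m n : ℕ}

lemma nuclearNorm_eq_of_charpoly_eq {m' : ℕ} {X : Matrix (Fin m) (Fin n) ℝ}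
    {Y : Matrix (Fin m') (Fin n) ℝ} (h : (Xᵀ * X).charpoly = (Yᵀ * Y).charpoly) :
    nuclearNorm X = nuclearNorm Y := by
  simp only [← conjTranspose_eq_transpose_of_trivial] at h
  unfold nuclearNorm
  rw [(IsHermitian.eigenvalues_eq_eigenvalues_iff _ _).mpr h]

lemma nuclearNorm_orthogonal_conj {m' : ℕ} {P : Matrix (Fin m') (Fin m) ℝ}
    {Q : Matrix (Fin n) (Fin n) ℝ} (hP : Pᵀ * P = 1) (hQ : Qᵀ * Q = 1)
    (A : Matrix (Fin m) (Fin n) ℝ) : nuclearNorm (P * A * Qᵀ) = nuclearNorm A := by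
  apply nuclearNorm_eq_of_charpoly_eq
  have hM : (P * A * Qᵀ)ᵀ * (P * A * Qᵀ) = Q * (Aᵀ * A * Qᵀ) := by
    simp only [transpose_mul, transpose_transpose, Matrix.mul_assoc]
    rw [← Matrix.mul_assoc Pᵀ, hP, Matrix.one_mul]
  rw [hM, charpoly_mul_comm, Matrix.mul_assoc, hQ, Matrix.mul_one]

end NuclearNorm

section SigMat

lemma Fin.sum_dite_val_lt {M : Type*} [AddCommMonoid M] {k n : ℕ} (hk : k ≤ n) (f : Fin k → M) :
    ∑ j : Fin n, (if h : (j : ℕ) < k then f ⟨j, h⟩ else 0) = ∑ i, f i := by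
  obtain ⟨d, rfl⟩ := Nat.exists_eq_add_of_le hk
  simp [Fin.sum_univ_add]

variable {m n : ℕ}

lemma sigMat_sub (a b : Fin (min m n) → ℝ) : sigMat a - sigMat b = sigMat (a - b) := by
  ext i j
  simp only [sigMat, Matrix.sub_apply]
  split_ifs <;> simp

lemma transpose_sigMat_mul_sigMat (a b : Fin (min m n) → ℝ) :
    (sigMat a)ᵀ * sigMat b = diagonal fun j : Fin n =>
      if h : (j : ℕ) < min m n then a ⟨j, h⟩ * b ⟨j, h⟩ else 0 := by
  ext j j'
  rw [mul_apply, diagonal_apply]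
  by_cases hj : (j : ℕ) < min m n
  · rw [Finset.sum_eq_single ⟨j, hj.trans_le (min_le_left m n)⟩]
    · by_cases hjj' : j = j'
      · subst hjj'
        simp [sigMat, lt_min_iff.mp hj]
      · simp [sigMat, hjj', Fin.val_inj]
    · intro i _ hi
      have : (i : ℕ) ≠ j := fun h => hi (Fin.ext h)
      simp [sigMat, this]
    · simp
  · refine (Finset.sum_eq_zero fun i _ => ?_).trans (by simp [hj])
    simp only [sigMat, transpose_apply]
    split_ifs with h1 h2
    · exact absurd (h1.1 ▸ h1.2) hj
    all_goals simp

lemma trace_transpose_sigMat_mul_sigMat (a b : Fin (min m n) → ℝ) :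
    ((sigMat a)ᵀ * sigMat b).trace = ∑ i, a i * b i := by
  rw [transpose_sigMat_mul_sigMat, trace_diagonal]
  exact Fin.sum_dite_val_lt (min_le_right m n) fun i => a i * b i

lemma nuclearNorm_sigMat {d : Fin (min m n) → ℝ} (hd : ∀ i, 0 ≤ d i) :
    nuclearNorm (sigMat d) = ∑ i, d i := by
  unfold nuclearNorm
  rw [IsHermitian.sum_comp_eigenvalues_of_eq_diagonal _
    (by rw [conjTranspose_eq_transpose_of_trivial, transpose_sigMat_mul_sigMat])]
  simp only [apply_dite Real.sqrt, Real.sqrt_mul_self (hd _), Real.sqrt_zero]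
  exact Fin.sum_dite_val_lt (min_le_right m n) d

lemma posSemidef_sq_smul_one_sub_transpose_sigMat_mul_self {c : Fin (min m n) → ℝ} {τ : ℝ}
    (hc : ∀ i, |c i| ≤ τ) :
    (τ ^ 2 • (1 : Matrix (Fin n) (Fin n) ℝ) - (sigMat c)ᵀ * sigMat c).PosSemidef := by
  rw [transpose_sigMat_mul_sigMat, smul_one_eq_diagonal, diagonal_sub]
  refine posSemidef_diagonal_iff.mpr fun j => ?_
  split_ifs with h
  · simpa [sq] using sq_le_sq' (abs_le.mp (hc _)).1 (abs_le.mp (hc _)).2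
  · simpa using sq_nonneg τ

end SigMat

section Duality

variable {m n : ℕ}

lemma exists_orthogonal_transpose_mul_self_eq_diagonal (Y : Matrix (Fin m) (Fin n) ℝ) :
    ∃ Q : Matrix (Fin n) (Fin n) ℝ, Qᵀ * Q = 1 ∧ Q * Qᵀ = 1 ∧
      (Y * Q)ᵀ * (Y * Q) = diagonal (isHermitian_conjTranspose_mul_self Y).eigenvalues := by
  set hA := isHermitian_conjTranspose_mul_self Y
  set Q := (hA.eigenvectorUnitary : Matrix (Fin n) (Fin n) ℝ)
  have h1 : star Q * Q = 1 := Unitary.coe_star_mul_self hA.eigenvectorUnitary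
  have h2 : Q * star Q = 1 := Unitary.coe_mul_star_self hA.eigenvectorUnitary
  have h3 : star Q * (Yᴴ * Y) * Q = diagonal (RCLike.ofReal ∘ hA.eigenvalues) := by
    rw [← Unitary.conjStarAlgAut_star_apply (S := ℝ) hA.eigenvectorUnitary]
    exact hA.conjStarAlgAut_star_eigenvectorUnitary
  simp only [star_eq_conjTranspose, conjTranspose_eq_transpose_of_trivial] at h1 h2 h3
  refine ⟨Q, h1, h2, ?_⟩
  rw [transpose_mul, Matrix.mul_assoc, ← Matrix.mul_assoc Yᵀ, ← Matrix.mul_assoc, h3]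
  rfl

theorem trace_transpose_mul_le_mul_nuclearNorm {G : Matrix (Fin m) (Fin n) ℝ} {τ : ℝ}
    (hτ : 0 ≤ τ) (hG : (τ ^ 2 • (1 : Matrix (Fin n) (Fin n) ℝ) - Gᵀ * G).PosSemidef)
    (Y : Matrix (Fin m) (Fin n) ℝ) : (Gᵀ * Y).trace ≤ τ * nuclearNorm Y := by
  obtain ⟨Q, hQ, hQ', hYQ⟩ := exists_orthogonal_transpose_mul_self_eq_diagonal Y
  have hGQ : ∀ k, ((G * Q)ᵀ * (G * Q)) k k ≤ τ ^ 2 := by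
    intro k
    have := (hG.conjTranspose_mul_mul_same Q).diag_nonneg (i := k)
    simp only [conjTranspose_eq_transpose_of_trivial, Matrix.mul_sub, Matrix.sub_mul,
      Matrix.mul_smul, Matrix.smul_mul, Matrix.mul_one, hQ, Matrix.sub_apply, Matrix.smul_apply]
      at this
    simpa [transpose_mul, Matrix.mul_assoc] using this
  calc (Gᵀ * Y).trace = ((G * Q)ᵀ * (Y * Q)).trace := by
        rw [transpose_mul, Matrix.mul_assoc, trace_mul_comm Qᵀ, Matrix.mul_assoc, Matrix.mul_assoc,
          hQ', Matrix.mul_one]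
    _ ≤ ∑ k, √(((G * Q)ᵀ * (G * Q)) k k) * √(((Y * Q)ᵀ * (Y * Q)) k k) :=
        trace_transpose_mul_le_sum_sqrt_diag _ _
    _ ≤ ∑ k, τ * √((isHermitian_conjTranspose_mul_self Y).eigenvalues k) := by
        simp only [hYQ, diagonal_apply_eq]
        gcongr with k
        exact (Real.sqrt_le_sqrt (hGQ k)).trans_eq (Real.sqrt_sq hτ)
    _ = τ * nuclearNorm Y := by rw [nuclearNorm, Finset.mul_sum]

end Duality

theorem isSubgradient_mul_nuclearNorm {m n : ℕ} {τ : ℝ} (hτ : 0 ≤ τ)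
    {U : Matrix (Fin m) (Fin m) ℝ} {V : Matrix (Fin n) (Fin n) ℝ}
    (hU : U * Uᵀ = 1) (hU' : Uᵀ * U = 1) (hV : V * Vᵀ = 1) (hV' : Vᵀ * V = 1)
    {d g : Fin (min m n) → ℝ} (hd : ∀ i, 0 ≤ d i) (hg : ∀ i, |g i| ≤ τ)
    (hdg : ∀ i, d i * g i = τ * d i) :
    IsSubgradient (fun X => τ * nuclearNorm X) (U * sigMat d * Vᵀ) (U * sigMat g * Vᵀ) := by
  intro X
  dsimp only
  have hD : nuclearNorm (U * sigMat d * Vᵀ) = ∑ i, d i := by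
    rw [nuclearNorm_orthogonal_conj hU' hV', nuclearNorm_sigMat hd]
  have hGD : ((U * sigMat g * Vᵀ)ᵀ * (U * sigMat d * Vᵀ)).trace = τ * ∑ i, d i := by
    simp only [trace_transpose_mul_orthogonal_conj hU' hV', trace_transpose_sigMat_mul_sigMat,
      Finset.mul_sum, mul_comm (g _), hdg]
  have hGX : ((U * sigMat g * Vᵀ)ᵀ * X).trace ≤ τ * nuclearNorm X := by
    have hX : nuclearNorm (Uᵀ * X * V) = nuclearNorm X := by
      simpa using nuclearNorm_orthogonal_conj (P := Uᵀ) (Q := Vᵀ) (by simpa using hU)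
        (by simpa using hV) X
    calc ((U * sigMat g * Vᵀ)ᵀ * X).trace = ((sigMat g)ᵀ * (Uᵀ * X * V)).trace := by
          simp only [transpose_mul, transpose_transpose, Matrix.mul_assoc]
          rw [trace_mul_comm]
          simp only [Matrix.mul_assoc]
      _ ≤ τ * nuclearNorm (Uᵀ * X * V) := trace_transpose_mul_le_mul_nuclearNorm hτ
          (posSemidef_sq_smul_one_sub_transpose_sigMat_mul_self hg) _
      _ = τ * nuclearNorm X := by rw [hX]
  rw [Matrix.mul_sub, trace_sub, hD, hGD]
  linarith

/-- The singular value thresholding operator D_τ(W) = U diag(max(σᵢ−τ,0)) Vᵀ is the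
unique minimizer of X ↦ τ‖X‖_* + ½‖X − W‖_F². -/
theorem svt_unique_minimizer {m n : ℕ} (τ : ℝ) (hτ : 0 < τ)
    (W : Matrix (Fin m) (Fin n) ℝ)
    (U : Matrix (Fin m) (Fin m) ℝ) (V : Matrix (Fin n) (Fin n) ℝ)
    (σ : Fin (min m n) → ℝ)
    (hU : U * Uᵀ = 1) (hU' : Uᵀ * U = 1)
    (hV : V * Vᵀ = 1) (hV' : Vᵀ * V = 1)
    (hσ0 : ∀ i, 0 ≤ σ i)
    (hW : W = U * sigMat σ * Vᵀ) :
    let D : Matrix (Fin m) (Fin n) ℝ := U * sigMat (fun i => max (σ i - τ) 0) * Vᵀ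
    (∀ X : Matrix (Fin m) (Fin n) ℝ,
        τ * nuclearNorm D + (1 / 2) * frobSq (D - W)
          ≤ τ * nuclearNorm X + (1 / 2) * frobSq (X - W)) ∧
    (∀ X : Matrix (Fin m) (Fin n) ℝ,
        τ * nuclearNorm X + (1 / 2) * frobSq (X - W)
          = τ * nuclearNorm D + (1 / 2) * frobSq (D - W) → X = D) := by
  intro D
  set g : Fin (min m n) → ℝ := fun i => min (σ i) τ
  have hWD : W - D = U * sigMat g * Vᵀ := by
    rw [hW, ← Matrix.sub_mul, ← Matrix.mul_sub, sigMat_sub]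
    congr 3
    funext i
    rcases le_total (σ i) τ with h | h <;> simp [g, h]
  have hsub : IsSubgradient (fun X => τ * nuclearNorm X) D (W - D) := by
    rw [hWD]
    refine isSubgradient_mul_nuclearNorm hτ.le hU hU' hV hV' (fun i => le_max_right _ _)
      (fun i => abs_le.mpr ⟨?_, min_le_right _ _⟩) (fun i => ?_)
    · linarith [le_min (hσ0 i) hτ.le]
    · rcases le_total (σ i) τ with h | h <;> simp [g, h, mul_comm]
  have hmin := hsub.add_half_frobSq_le
  refine ⟨fun X => ?_, fun X hX => ?_⟩
  · linarith [hmin X, frobSq_nonneg (X - D)]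
  · have : frobSq (X - D) = 0 := le_antisymm (by linarith [hmin X]) (frobSq_nonneg _)
    exact sub_eq_zero.mp (frobSq_eq_zero_iff.mp this)
end

section
/- For a third-order tensor A, the block circulant matrix of the t-product factors as bcirc(A * B) = bcirc(A) · bcirc(B): for A ∈ ℝ^{n1×n2×n3} and B ∈ ℝ^{n2×n4×n3}, the block circulant matrix of A * B equals the matrix product of the block circulant matrices of A and B. -/
open Matrix

/-- The tensor (conjugate) transpose: transpose each frontal slice and reverse
the order of slices 2 through n3. -/
def tTrans {n1 n2 n3 : ℕ} (A : Fin n1 → Fin n2 → Fin n3 → ℝ) :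
    Fin n2 → Fin n1 → Fin n3 → ℝ :=
  fun i j k => A j i (-k)

/-- The trace of a tensor: the sum of the traces of its frontal slices. -/
def tTrace {n n3 : ℕ} (A : Fin n → Fin n → Fin n3 → ℝ) : ℝ :=
  ∑ k : Fin n3, (fSlice A k).trace

/-- The tensor inner product ⟨U,V⟩ = Σ_{ijk} U_{ijk} V_{ijk}. -/
def tInner {n1 n2 n3 : ℕ} (U V : Fin n1 → Fin n2 → Fin n3 → ℝ) : ℝ :=
  ∑ i, ∑ j, ∑ k, U i j k * V i j k

/-- The block circulant matrix of a third-order tensor: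
the (r,s) block is the frontal slice A^(r-s mod n3). -/
def bcirc {n1 n2 n3 : ℕ} (A : Fin n1 → Fin n2 → Fin n3 → ℝ) :
    Matrix (Fin n3 × Fin n1) (Fin n3 × Fin n2) ℝ :=
  fun p q => A p.2 q.2 (p.1 - q.1)

theorem Fintype.sum_sub_mul_sub {G R : Type*} [AddCommGroup G] [Fintype G]
    [NonUnitalNonAssocSemiring R] (f g : G → R) (k l : G) :
    ∑ s, f (k - s) * g (s - l) = ∑ t, f (k - l - t) * g t := by
  rw [← (Equiv.subRight l).sum_comp (fun t => f (k - l - t) * g t)]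
  simp only [Equiv.subRight_apply, sub_sub_sub_cancel_right]

theorem bcirc_mul_bcirc_apply {n1 n2 n4 n3 : ℕ} [NeZero n3]
    (A : Fin n1 → Fin n2 → Fin n3 → ℝ) (B : Fin n2 → Fin n4 → Fin n3 → ℝ)
    (k l : Fin n3) (i : Fin n1) (j : Fin n4) :
    (bcirc A * bcirc B) (k, i) (l, j) = ∑ t, (fSlice A (k - l - t) * fSlice B t) i j := by
  simp only [bcirc, fSlice, mul_apply, Fintype.sum_prod_type]
  rw [Finset.sum_comm]
  simp only [Fintype.sum_sub_mul_sub (A i _) (B _ j)]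
  exact Finset.sum_comm

/-- bcirc(A * B) = bcirc(A) · bcirc(B). -/
theorem bcirc_tProd {n1 n2 n4 n3 : ℕ}
    (A : Fin n1 → Fin n2 → Fin n3 → ℝ) (B : Fin n2 → Fin n4 → Fin n3 → ℝ) :
    bcirc (tProd A B) = bcirc A * bcirc B := by
  ext ⟨k, i⟩ ⟨l, j⟩
  have : NeZero n3 := ⟨k.pos.ne'⟩
  rw [bcirc_mul_bcirc_apply]
  rfl
end
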